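/- Let [τ₁, τ₂, τ₃] be a bicyclic bitrade in τ-representation, say τ_j consists of exactly two cycles. Then every cycle of τ_{j+1} and every cycle of τ_{j−1} is a transposition (has length exactly 2), the two cycles of τ_j have the same length n, and |Γ| = 2n. -/

import Mathlib

/-- The set of points moved by a permutation. -/
def mov (σ : Equiv.Perm ℕ) : Set ℕ := {x | σ x ≠ x}

/-- The underlying set `Γ = mov(τ₁) ∪ mov(τ₂) ∪ mov(τ₃)` of a triple of permutations. -/
def Gam (τ : Fin 3 → Equiv.Perm ℕ) : Set ℕ := mov (τ 0) ∪ mov (τ 1) ∪ mov (τ 2)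

/-- A bitrade in τ-representation: a triple `[τ₁, τ₂, τ₃]` of permutations of the
finite set `Γ = mov(τ₁) ∪ mov(τ₂) ∪ mov(τ₃)` (all permutations composed left to
right) satisfying (T1) `τ₁τ₂τ₃ = 1`, (T2) any cycle of `τ_i` and any cycle of `τ_j`
(`i < j`) move at most one common point, and (T3) each `τ_i` is fixed-point-free
on `Γ`. -/
structure IsTauRep (τ : Fin 3 → Equiv.Perm ℕ) : Prop where
  fin : (Gam τ).Finite
  t1 : ∀ x, τ 2 (τ 1 (τ 0 x)) = x
  t2 : ∀ i j : Fin 3, i < j → ∀ x y : ℕ, x ≠ y →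
    ¬((τ i).SameCycle x y ∧ (τ j).SameCycle x y)
  t3 : ∀ i : Fin 3, ∀ x ∈ Gam τ, τ i x ≠ x

/-- The same-cycle setoid on the set of points moved by `σ`;
its classes are the (nontrivial) cycles of `σ`. -/
def cycSetoidOn (σ : Equiv.Perm ℕ) : Setoid (mov σ) :=
  ⟨fun a b => σ.SameCycle a.1 b.1,
    ⟨fun a => Equiv.Perm.SameCycle.refl σ a.1,
     fun h => h.symm, fun h h' => h.trans h'⟩⟩

/-- `zc σ` is the number of cycles of `σ`. -/
noncomputable def zc (σ : Equiv.Perm ℕ) : ℕ := Nat.card (Quotient (cycSetoidOn σ))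

/-- (T4): the group `⟨τ₁, τ₂, τ₃⟩` acts transitively on `Γ`. -/
def TransOn (τ : Fin 3 → Equiv.Perm ℕ) : Prop :=
  ∀ x ∈ Gam τ, ∀ y ∈ Gam τ,
    ∃ g ∈ Subgroup.closure ({τ 0, τ 1, τ 2} : Set (Equiv.Perm ℕ)), g x = y

/-- A spherical bitrade in τ-representation: (T4) holds and the genus defined by
Euler's formula `order = size + 2 - 2g` is zero. -/
def Spherical (τ : Fin 3 → Equiv.Perm ℕ) : Prop :=
  IsTauRep τ ∧ TransOn τ ∧
    zc (τ 0) + zc (τ 1) + zc (τ 2) = Nat.card (Gam τ) + 2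

/-- A bitrade in τ-representation is bicyclic if some `τ_j` has exactly two cycles. -/
def Bicyclic (τ : Fin 3 → Equiv.Perm ℕ) : Prop := ∃ j : Fin 3, zc (τ j) = 2

/-- The inverse `Z⁻¹ = [τ₁⁻¹, τ₂⁻¹, τ₂τ₁]` of a bitrade in τ-representation
(`τ₂τ₁`, composed left to right, is `τ 0 * τ 1` in Lean's convention). -/
def ZInv (τ : Fin 3 → Equiv.Perm ℕ) : Fin 3 → Equiv.Perm ℕ :=
  ![(τ 0)⁻¹, (τ 1)⁻¹, τ 0 * τ 1]

/-- `SlideRel τ x j u τ'` says that `τ'` is the result of the slide expansion of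
`τ` at the point `x ∈ Γ` in direction `j`, with new point `u ∉ Γ`.  Writing
`k = j+1`, `l = j+2`, `w = xτ_j`, `a = xτ_j⁻¹`, `b = wτ_j`, `z = xτ_k`,
`y = wτ_l⁻¹`, the preconditions are that the `τ_j`-cycle through `x` has length at
least 3 and that the `τ_k`-cycle through `x` and the `τ_l`-cycle through `w` have
no common point; the new permutations send `a ↦ u ↦ b`, `x ↦ w ↦ x` (direction `j`),
insert `u` after `x` (direction `k`) and insert `u` between `y` and `w`
(direction `l`), agreeing with the old ones elsewhere. -/
def SlideRel (τ : Fin 3 → Equiv.Perm ℕ) (x : ℕ) (j : Fin 3) (u : ℕ)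
    (τ' : Fin 3 → Equiv.Perm ℕ) : Prop :=
  x ∈ Gam τ ∧ u ∉ Gam τ ∧
  τ j x ≠ x ∧ τ j (τ j x) ≠ x ∧
  (∀ p : ℕ, (τ (j + 1)).SameCycle x p → (τ (j + 2)).SameCycle (τ j x) p → False) ∧
  (τ' j ((τ j)⁻¹ x) = u ∧ τ' j u = τ j (τ j x) ∧
    τ' j x = τ j x ∧ τ' j (τ j x) = x ∧
    ∀ p : ℕ, p ≠ (τ j)⁻¹ x → p ≠ u → p ≠ x → p ≠ τ j x → τ' j p = τ j p) ∧
  (τ' (j + 1) x = u ∧ τ' (j + 1) u = τ (j + 1) x ∧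
    ∀ p : ℕ, p ≠ x → p ≠ u → τ' (j + 1) p = τ (j + 1) p) ∧
  (τ' (j + 2) ((τ (j + 2))⁻¹ (τ j x)) = u ∧ τ' (j + 2) u = τ j x ∧
    ∀ p : ℕ, p ≠ (τ (j + 2))⁻¹ (τ j x) → p ≠ u → τ' (j + 2) p = τ (j + 2) p)

/-!
Let `σ = τ_j` have two cycles and let `ρ` be one of the other two permutations. By (T2) a point
and its `ρ`-image lie in different `σ`-cycles, so `ρ` swaps the two cycles of `σ`. Then `x` and
`ρ² x` share a `σ`-cycle and a `ρ`-cycle, so (T2) forces `ρ² = 1`. As a bijection between the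
two `σ`-cycles, `ρ` shows that they have the same size `n`, which is the minimal period of `σ`
at each of their points.
-/

open Equiv Function

theorem Equiv.Perm.minimalPeriod_eq_ncard_setOf_sameCycle {α : Type*} {σ : Perm α} {x : α}
    (hfin : {y | σ.SameCycle x y}.Finite) :
    minimalPeriod σ x = {y | σ.SameCycle x y}.ncard := by
  have horbit : {y | σ.SameCycle x y} = MulAction.orbit (Subgroup.zpowers σ) x := by
    ext y
    simp [Perm.SameCycle, MulAction.mem_orbit_iff, Subgroup.exists_zpowers, Subgroup.smul_def,
      Perm.smul_def]
  rw [horbit] at hfin ⊢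
  have := hfin.fintype
  rw [← Nat.card_coe_set_eq, Nat.card_eq_fintype_card, ← MulAction.minimalPeriod_eq_card]
  rfl

theorem Equiv.Perm.SameCycle.setOf_sameCycle_eq {α : Type*} {σ : Perm α} {x y : α}
    (h : σ.SameCycle x y) : {z | σ.SameCycle x z} = {z | σ.SameCycle y z} :=
  Set.ext fun _ => ⟨h.symm.trans, h.trans⟩

theorem sameCycle_of_not_sameCycle_of_zc_eq_two {σ : Perm ℕ} (hσ : zc σ = 2) {x y z : ℕ}
    (hx : σ x ≠ x) (hy : σ y ≠ y) (hz : σ z ≠ z)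
    (hxy : ¬ σ.SameCycle x y) (hyz : ¬ σ.SameCycle y z) : σ.SameCycle x z := by
  let cyc : mov σ → Quotient (cycSetoidOn σ) := Quotient.mk _
  obtain ⟨c, -, hc⟩ := (Nat.card_eq_two_iff' (cyc ⟨x, hx⟩)).mp hσ
  by_contra hxz
  have hyc : cyc ⟨y, hy⟩ = c := hc _ fun h => hxy (Quotient.exact h).symm
  have hzc : cyc ⟨z, hz⟩ = c := hc _ fun h => hxz (Quotient.exact h).symm
  exact hyz (Quotient.exact (hyc.trans hzc.symm))

theorem exists_apply_ne_of_zc_eq_two {σ : Perm ℕ} (hσ : zc σ = 2) : ∃ x, σ x ≠ x := by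
  obtain ⟨⟨⟨x, hx⟩⟩, -⟩ := Nat.card_ne_zero.mp (hσ.trans_ne two_ne_zero)
  exact ⟨x, hx⟩

/-- The relation between `τ_i` and `τ_k` (`i ≠ k`) in a bitrade given by (T2) and (T3). -/
structure Transversal (σ ρ : Perm ℕ) : Prop where
  apply_ne_iff : ∀ x, ρ x ≠ x ↔ σ x ≠ x
  eq_of_sameCycle : ∀ {x y}, σ.SameCycle x y → ρ.SameCycle x y → x = y

namespace Transversal

variable {σ ρ : Perm ℕ}

theorem not_sameCycle_apply (hT : Transversal σ ρ) {x : ℕ} (hx : σ x ≠ x) :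
    ¬ σ.SameCycle x (ρ x) := fun h =>
  (hT.apply_ne_iff x).2 hx (hT.eq_of_sameCycle h (Perm.SameCycle.refl ρ x).apply_right).symm

theorem apply_ne_apply (hT : Transversal σ ρ) {x : ℕ} (hx : σ x ≠ x) : σ (ρ x) ≠ ρ x :=
  (hT.apply_ne_iff _).1 (ρ.injective.ne ((hT.apply_ne_iff x).2 hx))

theorem apply_apply_eq_self (hT : Transversal σ ρ) (hσ : zc σ = 2) {x : ℕ}
    (hx : σ x ≠ x) : ρ (ρ x) = x := by
  have hσρx : σ (ρ x) ≠ ρ x := hT.apply_ne_apply hx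
  have hσρρx : σ (ρ (ρ x)) ≠ ρ (ρ x) := hT.apply_ne_apply hσρx
  refine (hT.eq_of_sameCycle ?_ (Perm.SameCycle.refl ρ x).apply_right.apply_right).symm
  exact sameCycle_of_not_sameCycle_of_zc_eq_two hσ hx hσρx hσρρx
    (hT.not_sameCycle_apply hx) (hT.not_sameCycle_apply hσρx)

theorem minimalPeriod_eq_two (hT : Transversal σ ρ) (hσ : zc σ = 2) {x : ℕ} (hx : σ x ≠ x) :
    minimalPeriod ρ x = 2 :=
  minimalPeriod_eq_prime (hT.apply_apply_eq_self hσ hx) ((hT.apply_ne_iff x).2 hx)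

theorem sameCycle_apply_apply (hT : Transversal σ ρ) (hσ : zc σ = 2) {x y : ℕ} (hx : σ x ≠ x)
    (hxy : σ.SameCycle x y) : σ.SameCycle (ρ x) (ρ y) := by
  have hy : σ y ≠ y := hxy.apply_eq_self_iff.not.1 hx
  refine sameCycle_of_not_sameCycle_of_zc_eq_two hσ (hT.apply_ne_apply hx) hx
    (hT.apply_ne_apply hy) (fun h => hT.not_sameCycle_apply hx h.symm) fun h => ?_
  exact hT.not_sameCycle_apply hy (hxy.symm.trans h)

theorem image_setOf_sameCycle (hT : Transversal σ ρ) (hσ : zc σ = 2) {x : ℕ} (hx : σ x ≠ x) :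
    ρ '' {y | σ.SameCycle x y} = {y | σ.SameCycle (ρ x) y} := by
  refine subset_antisymm (Set.image_subset_iff.2 fun y => hT.sameCycle_apply_apply hσ hx)
    fun y hy => ⟨ρ y, ?_, hT.apply_apply_eq_self hσ (hy.apply_eq_self_iff.not.1 ?_)⟩
  · have := hT.sameCycle_apply_apply hσ (hT.apply_ne_apply hx) hy
    rwa [hT.apply_apply_eq_self hσ hx] at this
  · exact hT.apply_ne_apply hx

theorem ncard_setOf_sameCycle_apply (hT : Transversal σ ρ) (hσ : zc σ = 2) {x : ℕ}
    (hx : σ x ≠ x) : {y | σ.SameCycle (ρ x) y}.ncard = {y | σ.SameCycle x y}.ncard := by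
  rw [← hT.image_setOf_sameCycle hσ hx, Set.ncard_image_of_injective _ ρ.injective]

theorem setOf_sameCycle_union (hT : Transversal σ ρ) (hσ : zc σ = 2) {x : ℕ} (hx : σ x ≠ x) :
    {y | σ.SameCycle x y} ∪ {y | σ.SameCycle (ρ x) y} = mov σ := by
  refine subset_antisymm (Set.union_subset ?_ ?_) fun y hy => ?_
  · exact fun y hxy => hxy.apply_eq_self_iff.not.1 hx
  · exact fun y hxy => hxy.apply_eq_self_iff.not.1 (hT.apply_ne_apply hx)
  · by_cases hxy : σ.SameCycle x y
    · exact Or.inl hxy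
    · exact Or.inr (sameCycle_of_not_sameCycle_of_zc_eq_two hσ (hT.apply_ne_apply hx) hx hy
        (fun h => hT.not_sameCycle_apply hx h.symm) hxy)

theorem ncard_mov (hT : Transversal σ ρ) (hσ : zc σ = 2) (hfin : (mov σ).Finite) {x : ℕ}
    (hx : σ x ≠ x) : (mov σ).ncard = 2 * {y | σ.SameCycle x y}.ncard := by
  have hdisj : Disjoint {y | σ.SameCycle x y} {y | σ.SameCycle (ρ x) y} :=
    Set.disjoint_left.2 fun y hxy hρxy => hT.not_sameCycle_apply hx (hxy.trans hρxy.symm)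
  rw [← hT.setOf_sameCycle_union hσ hx] at hfin ⊢
  rw [Set.ncard_union_eq hdisj (hfin.subset Set.subset_union_left)
    (hfin.subset Set.subset_union_right), hT.ncard_setOf_sameCycle_apply hσ hx, two_mul]

theorem minimalPeriod_eq_ncard (hT : Transversal σ ρ) (hσ : zc σ = 2) (hfin : (mov σ).Finite)
    {x y : ℕ} (hx : σ x ≠ x) (hy : σ y ≠ y) :
    minimalPeriod σ y = {z | σ.SameCycle x z}.ncard := by
  rw [Perm.minimalPeriod_eq_ncard_setOf_sameCycle
    (hfin.subset fun z hyz => hyz.apply_eq_self_iff.not.1 hy)]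
  by_cases hxy : σ.SameCycle x y
  · rw [hxy.setOf_sameCycle_eq]
  · have hρxy : σ.SameCycle y (ρ x) := sameCycle_of_not_sameCycle_of_zc_eq_two hσ hy hx
      (hT.apply_ne_apply hx) (fun h => hxy h.symm) (hT.not_sameCycle_apply hx)
    rw [hρxy.setOf_sameCycle_eq, hT.ncard_setOf_sameCycle_apply hσ hx]

end Transversal

namespace IsTauRep

variable {τ : Fin 3 → Perm ℕ}

theorem apply_ne_iff (h : IsTauRep τ) (i : Fin 3) {x : ℕ} : τ i x ≠ x ↔ x ∈ Gam τ := by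
  refine ⟨fun hx => ?_, h.t3 i x⟩
  fin_cases i
  exacts [Or.inl (Or.inl hx), Or.inl (Or.inr hx), Or.inr hx]

theorem transversal (h : IsTauRep τ) {i k : Fin 3} (hik : i ≠ k) : Transversal (τ i) (τ k) where
  apply_ne_iff _ := (h.apply_ne_iff k).trans (h.apply_ne_iff i).symm
  eq_of_sameCycle {x y} hi hk := by
    by_contra hxy
    rcases hik.lt_or_gt with hlt | hlt
    · exact h.t2 i k hlt x y hxy ⟨hi, hk⟩
    · exact h.t2 k i hlt x y hxy ⟨hk, hi⟩

end IsTauRep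

/-- In a bicyclic bitrade in τ-representation (say `τ_j` has exactly
two cycles), every cycle of `τ_{j+1}` and of `τ_{j−1} = τ_{j+2}` has length exactly 2,
the two cycles of `τ_j` have the same length `n`, and `|Γ| = 2n`.  (The length of the
cycle of a permutation through a point is its minimal period at that point.) -/
theorem bicyclic_cycle_lengths (τ : Fin 3 → Equiv.Perm ℕ) (h : IsTauRep τ)
    (j : Fin 3) (hbc : zc (τ j) = 2) :
    (∀ x ∈ Gam τ, Function.minimalPeriod (⇑(τ (j + 1))) x = 2) ∧
    (∀ x ∈ Gam τ, Function.minimalPeriod (⇑(τ (j + 2))) x = 2) ∧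
    ∃ n : ℕ, (∀ x ∈ Gam τ, Function.minimalPeriod (⇑(τ j)) x = n) ∧
      Nat.card (Gam τ) = 2 * n := by
  have hmov : mov (τ j) = Gam τ := Set.ext fun _ => h.apply_ne_iff j
  have hperiod : ∀ i ≠ j, ∀ x ∈ Gam τ, minimalPeriod (τ i) x = 2 := fun i hij x hx =>
    (h.transversal hij.symm).minimalPeriod_eq_two hbc (h.t3 j x hx)
  have hT := h.transversal (k := j + 1) (add_ne_left.2 one_ne_zero).symm
  have hfin : (mov (τ j)).Finite := hmov ▸ h.fin
  obtain ⟨x₀, hx₀⟩ := exists_apply_ne_of_zc_eq_two hbc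
  refine ⟨hperiod _ (add_ne_left.2 one_ne_zero), hperiod _ (add_ne_left.2 (by decide)), _,
    fun y hy => hT.minimalPeriod_eq_ncard hbc hfin hx₀ (h.t3 j y hy), ?_⟩
  rw [Nat.card_coe_set_eq, ← hmov, hT.ncard_mov hbc hfin hx₀]
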